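/- arXiv:1203.0373 — 2 statements merged into one kernel-verified Lean document; each statement's English description precedes it below -/
import Mathlib

section
/- Let (X,d) be a complete metric space with a Borel-regular measure μ that is exponentially locally doubling, equipped with a truncated dyadic structure with truncation generation J, and fix t₀ ≤ δ^J. For 0 < t ≤ t₀ let A_t denote the dyadic averaging operator, defined on u ∈ L²(X,μ;ℂ^N) by A_t u(x) = (1/μ(Q)) ∫_Q u dμ whenever x ∈ Q ∈ Δ_t. Let ν be a positive Borel measure on X × (0,t₀] with finite Carleson norm ‖ν‖_C = sup{ ν(R_Q)/μ(Q) : Q ∈ Δ_t, t ≤ t₀ }, where R_Q = closure(Q) × (0, ℓ(Q)] is the Carleson box over Q. Then there is a constant C, depending only on the doubling and dyadic constants, such that ∬_{X×(0,t₀]} |A_t u(x)|² dν(x,t) ≤ C ‖ν‖_C ‖u‖²_{L²(X;ℂ^N)} for all u ∈ L²(X,μ;ℂ^N). -/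
open MeasureTheory Metric
open scoped ENNReal NNReal

/-- A *truncated dyadic structure* on a metric measure space `(X, d, μ)`. -/
structure TruncatedDyadicStructure (X : Type*) [MetricSpace X] [MeasurableSpace X]
    (μ : Measure X) where
  idx : ℕ → Set ℕ
  Q : ℕ → ℕ → Set X
  z : ℕ → ℕ → X
  δ : ℝ
  a₀ : ℝ
  η : ℝ
  C₁ : ℝ
  C₂ : ℝ
  δ_pos : 0 < δ
  δ_lt_one : δ < 1
  a₀_pos : 0 < a₀
  η_pos : 0 < η
  C₁_pos : 0 < C₁
  C₂_pos : 0 < C₂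
  isOpen : ∀ k, ∀ α ∈ idx k, IsOpen (Q k α)
  centre_mem : ∀ k, ∀ α ∈ idx k, z k α ∈ Q k α
  covers : ∀ k, μ (Set.univ \ ⋃ α ∈ idx k, Q k α) = 0
  nested : ∀ k l, k ≤ l → ∀ α ∈ idx k, ∀ β ∈ idx l,
    Q l β ⊆ Q k α ∨ Q l β ∩ Q k α = ∅
  ancestor : ∀ k, ∀ α ∈ idx k, ∀ l < k, ∃! β, β ∈ idx l ∧ Q k α ⊆ Q l β
  diam_le : ∀ k, ∀ α ∈ idx k, Metric.diam (Q k α) ≤ C₁ * δ ^ k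
  ball_subset : ∀ k, ∀ α ∈ idx k, ball (z k α) (a₀ * δ ^ k) ⊆ Q k α
  small_boundary : ∀ k, ∀ α ∈ idx k, ∀ t > (0 : ℝ),
    μ {x ∈ Q k α | EMetric.infEdist x (Q k α)ᶜ ≤ ENNReal.ofReal (t * δ ^ k)}
      ≤ ENNReal.ofReal (C₂ * t ^ η) * μ (Q k α)

namespace TruncatedDyadicStructure

variable {X : Type*} [MetricSpace X] [MeasurableSpace X] {μ : Measure X}

/-- The generation associated to a scale `t`: the unique `j` with `δ^(j+1) < t ≤ δ^j`
(for `0 < t ≤ δ^J` this is well defined and `≥ J`); thus `Δ_t = Δ^(gen t)`. -/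
noncomputable def gen (D : TruncatedDyadicStructure X μ) (t : ℝ) : ℕ :=
  sSup {j : ℕ | t ≤ D.δ ^ j}

/-- The dyadic averaging operator `A_t`: `A_t u (x) = ⨍_Q u dμ` whenever
`x ∈ Q ∈ Δ_t`, and `0` if `x` lies in no cube of the generation of `t`. -/
noncomputable def dyadicAvg (D : TruncatedDyadicStructure X μ) {E : Type*}
    [NormedAddCommGroup E] [NormedSpace ℝ E]
    (u : X → E) (t : ℝ) (x : X) : E :=
  open scoped Classical in
  if h : ∃ α ∈ D.idx (D.gen t), x ∈ D.Q (D.gen t) α then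
    ⨍ y in D.Q (D.gen t) h.choose, u y ∂μ
  else 0

end TruncatedDyadicStructure

/-!
On the Whitney box `Q × (δ ℓ(Q), ℓ(Q)]` of a dyadic cube, `|A_t u|` is at most the average of
`|u|` over `Q`. Hence the set where this majorant exceeds `l` is covered by the Carleson boxes of
the cubes on which `|u|` has average `> l`. Among finitely many cubes the maximal ones are
disjoint and their Carleson boxes contain all the others, so the Carleson condition gives
`l/2 · ν(majorant > l) ≤ Cν ∑ l/2 · μ(Q) ≤ Cν ∫_{|u| > l/2} |u|`, the last step because each such
cube satisfies `l/2 · μ(Q) ≤ ∫_{Q ∩ {|u| > l/2}} |u|`. Summing this weak-type bound over the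
levels `l = 2^n` gives the `L²` bound, with `C = 32`.
-/

open Set

namespace ENNReal

lemma tsum_ite_le_two_zpow_eq (M : ℤ) :
    ∑' n : ℤ, (if n ≤ M then (2 : ℝ≥0∞) ^ n else 0) = 2 * 2 ^ M := by
  have hinj : Function.Injective fun k : ℕ => M - k := fun a b h => by simpa using h
  rw [← hinj.tsum_eq fun n hn => ⟨(M - n).toNat, by grind [Function.mem_support]⟩]
  have hterm (k : ℕ) : (if M - (k : ℤ) ≤ M then (2 : ℝ≥0∞) ^ (M - k) else 0) = 2 ^ M * 2⁻¹ ^ k := by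
    rw [if_pos (by omega), ENNReal.zpow_sub two_ne_zero ofNat_ne_top, zpow_natCast, ENNReal.inv_pow]
  simp only [hterm, ENNReal.tsum_mul_left, ENNReal.tsum_geometric, one_sub_inv_two, inv_inv,
    mul_comm]

lemma two_mul_zpow_sub_one (n : ℤ) : 2 * (2 : ℝ≥0∞) ^ (n - 1) = 2 ^ n := by
  rw [ENNReal.zpow_sub two_ne_zero ofNat_ne_top, zpow_one, mul_comm, mul_assoc,
    ENNReal.inv_mul_cancel two_ne_zero ofNat_ne_top, mul_one]

lemma tsum_ite_two_zpow_lt_le (a : ℝ≥0∞) :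
    ∑' n : ℤ, (if (2 : ℝ≥0∞) ^ n < a then (2 : ℝ≥0∞) ^ n else 0) ≤ 2 * a := by
  rcases eq_or_ne a 0 with rfl | ha₀
  · simp
  rcases eq_or_ne a ⊤ with rfl | ha
  · simp
  obtain ⟨M, hMa, haM⟩ := exists_mem_Ioc_zpow ha₀ ha one_lt_two ofNat_ne_top
  calc ∑' n : ℤ, (if (2 : ℝ≥0∞) ^ n < a then (2 : ℝ≥0∞) ^ n else 0)
      ≤ ∑' n : ℤ, (if n ≤ M then (2 : ℝ≥0∞) ^ n else 0) := by
        refine ENNReal.tsum_le_tsum fun n => ?_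
        by_cases hna : 2 ^ n < a
        · have hnM : n ≤ M := by
            by_contra! hMn
            exact (hna.trans_le haM).not_ge (zpow_le_of_le one_le_two (by omega))
          simp [hna, hnM]
        · simp [hna]
    _ = 2 * 2 ^ M := tsum_ite_le_two_zpow_eq M
    _ ≤ 2 * a := by gcongr

lemma sq_le_sixteen_mul_tsum (a : ℝ≥0∞) :
    a ^ 2 ≤ 16 * ∑' n : ℤ, (if 2 * 2 ^ n < a then ((2 : ℝ≥0∞) ^ n) ^ 2 else 0) := by
  rcases eq_or_ne a 0 with rfl | ha₀
  · simp
  rcases eq_or_ne a ⊤ with rfl | ha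
  · have hsum : ∑' n : ℤ, (if 2 * 2 ^ n < ∞ then ((2 : ℝ≥0∞) ^ n) ^ 2 else 0) = ∞ := by
      by_contra hfin
      obtain ⟨m, hm⟩ := ENNReal.exists_nat_gt hfin
      have hterm : (m : ℝ≥0∞) ≤ ((2 : ℝ≥0∞) ^ (m : ℤ)) ^ 2 := by
        rw [zpow_natCast, ← pow_mul]
        exact_mod_cast Nat.lt_two_pow_self.le.trans (Nat.pow_le_pow_right two_pos (by omega))
      refine hm.not_ge (hterm.trans ?_)
      refine le_trans (le_of_eq (if_pos ?_).symm) (ENNReal.le_tsum (m : ℤ))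
      exact mul_lt_top ofNat_lt_top (zpow_lt_top two_ne_zero ofNat_ne_top _)
    simp [hsum]
  obtain ⟨M, hMa, haM⟩ := exists_mem_Ioc_zpow ha₀ ha one_lt_two ofNat_ne_top
  have hsplit : (2 : ℝ≥0∞) ^ M = 2 * 2 ^ (M - 1) := (two_mul_zpow_sub_one M).symm
  calc a ^ 2 ≤ (2 ^ (M + 1)) ^ 2 := by gcongr
    _ = 16 * ((2 : ℝ≥0∞) ^ (M - 1)) ^ 2 := by
        rw [← two_mul_zpow_sub_one, add_sub_cancel_right, hsplit]; ring
    _ ≤ _ := by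
        gcongr
        refine le_trans (le_of_eq (if_pos ?_).symm) (ENNReal.le_tsum (M - 1))
        rwa [← hsplit]

end ENNReal

lemma exists_pairwiseDisjoint_subfamily_of_nested {ι X α : Type*} [LinearOrder α] [DecidableEq ι]
    (Q : ι → Set X) (g : ι → α) (hQ : ∀ i j, g i ≤ g j → Q j ⊆ Q i ∨ Disjoint (Q j) (Q i))
    (s : Finset ι) :
    ∃ t ⊆ s, (t : Set ι).PairwiseDisjoint Q ∧ ∀ i ∈ s, ∃ j ∈ t, Q i ⊆ Q j ∧ g j ≤ g i := by
  induction s using Finset.induction_on_max_value g with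
  | empty => exact ⟨∅, subset_rfl, by simp, by simp⟩
  | insert a s _ hmax ih =>
    obtain ⟨t, hts, hdisj, hcover⟩ := ih
    by_cases ha : ∃ j ∈ t, Q a ⊆ Q j ∧ g j ≤ g a
    · exact ⟨t, hts.trans (Finset.subset_insert a s), hdisj,
        Finset.forall_mem_insert _ _ _ |>.2 ⟨ha, hcover⟩⟩
    push Not at ha
    refine ⟨insert a t, Finset.insert_subset_insert a hts, ?_, ?_⟩
    · rw [Finset.coe_insert]
      refine hdisj.insert fun j hj _ => ?_
      have hja := hmax j (hts hj)
      exact (hQ j a hja).resolve_left fun h => (ha j hj h).not_ge hja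
    · refine Finset.forall_mem_insert _ _ _ |>.2
        ⟨⟨a, Finset.mem_insert_self a t, subset_rfl, le_rfl⟩, fun i hi => ?_⟩
      obtain ⟨j, hj, hij, hg⟩ := hcover i hi
      exact ⟨j, Finset.mem_insert_of_mem hj, hij, hg⟩

theorem measure_iUnion_le_of_nested {ι X Y α : Type*} [Countable ι] [LinearOrder α]
    [MeasurableSpace X] [MeasurableSpace Y] {μ : Measure X} {ν : Measure Y}
    {Q : ι → Set X} {R : ι → Set Y} (g : ι → α) (hQm : ∀ i, MeasurableSet (Q i))
    (hQ : ∀ i j, g i ≤ g j → Q j ⊆ Q i ∨ Disjoint (Q j) (Q i))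
    (hR : ∀ i j, Q i ⊆ Q j → g j ≤ g i → R i ⊆ R j) (hRQ : ∀ i, ν (R i) ≤ μ (Q i)) :
    ν (⋃ i, R i) ≤ μ (⋃ i, Q i) := by
  classical
  have hmono : Monotone fun t : Finset ι => ⋃ i ∈ t, R i := fun s t hst =>
    biUnion_subset_biUnion_left hst
  rw [iUnion_eq_iUnion_finset R, hmono.measure_iUnion]
  refine iSup_le fun s => ?_
  obtain ⟨t, -, hdisj, hcover⟩ := exists_pairwiseDisjoint_subfamily_of_nested Q g hQ s
  calc ν (⋃ i ∈ s, R i)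
      ≤ ν (⋃ j ∈ t, R j) := measure_mono <| iUnion₂_subset fun i hi => by
        obtain ⟨j, hj, hij, hg⟩ := hcover i hi
        exact (hR i j hij hg).trans (subset_biUnion_of_mem hj)
    _ ≤ ∑ j ∈ t, ν (R j) := measure_biUnion_finset_le _ _
    _ ≤ ∑ j ∈ t, μ (Q j) := Finset.sum_le_sum fun j _ => hRQ j
    _ = μ (⋃ j ∈ t, Q j) := (measure_biUnion_finset hdisj fun j _ => hQm j).symm
    _ ≤ μ (⋃ i, Q i) := measure_mono <| iUnion₂_subset fun j _ => subset_iUnion Q j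

section

variable {α β : Type*} [MeasurableSpace α] [MeasurableSpace β] {μ : Measure α} {ν : Measure β}

theorem lintegral_sq_le_of_half_mul_measure_lt_le {G : β → ℝ≥0∞} {w : α → ℝ≥0∞} {C : ℝ≥0∞}
    (hG : Measurable G) (hw : Measurable w)
    (h : ∀ l, l / 2 * ν {q | l < G q} ≤ C * ∫⁻ x in {x | l / 2 < w x}, w x ∂μ) :
    ∫⁻ q, G q ^ 2 ∂ν ≤ 32 * C * ∫⁻ x, w x ^ 2 ∂μ := by
  have hG_lt (n : ℤ) : MeasurableSet {q | 2 * 2 ^ n < G q} := measurableSet_lt measurable_const hG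
  have hw_lt (n : ℤ) : MeasurableSet {x | (2 : ℝ≥0∞) ^ n < w x} :=
    measurableSet_lt measurable_const hw
  have hlayer (n : ℤ) : ((2 : ℝ≥0∞) ^ n) ^ 2 * ν {q | 2 * 2 ^ n < G q}
      ≤ 2 ^ n * (C * ∫⁻ x in {x | 2 ^ n < w x}, w x ∂μ) := by
    have := h (2 * 2 ^ n)
    rw [mul_comm 2, ENNReal.mul_div_cancel_right two_ne_zero ENNReal.ofNat_ne_top,
      mul_comm _ 2] at this
    rw [sq, mul_assoc]
    gcongr
  have hsum : ∑' n : ℤ, (2 : ℝ≥0∞) ^ n * ∫⁻ x in {x | 2 ^ n < w x}, w x ∂μ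
      = ∫⁻ x, (∑' n : ℤ, if (2 : ℝ≥0∞) ^ n < w x then 2 ^ n else 0) * w x ∂μ := by
    simp_rw [← ENNReal.tsum_mul_right, ← lintegral_indicator (hw_lt _),
      ← lintegral_const_mul _ (hw.indicator (hw_lt _))]
    rw [← lintegral_tsum fun n => ((hw.indicator (hw_lt n)).const_mul _).aemeasurable]
    congr with x
    congr with n
    simp only [indicator_apply, mem_ofPred_eq]
    split_ifs <;> simp
  calc ∫⁻ q, G q ^ 2 ∂ν
      ≤ ∫⁻ q, 16 * ∑' n : ℤ, {q | 2 * 2 ^ n < G q}.indicator (fun _ => ((2 : ℝ≥0∞) ^ n) ^ 2) q ∂ν :=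
        lintegral_mono fun q => by simpa only [indicator_apply, mem_ofPred_eq] using
          ENNReal.sq_le_sixteen_mul_tsum (G q)
    _ = 16 * ∑' n : ℤ, ((2 : ℝ≥0∞) ^ n) ^ 2 * ν {q | 2 * 2 ^ n < G q} := by
        rw [lintegral_const_mul' _ _ (by simp), lintegral_tsum fun n =>
          (measurable_const.indicator (hG_lt n)).aemeasurable]
        simp only [lintegral_indicator_const (hG_lt _)]
    _ ≤ 16 * ∑' n : ℤ, 2 ^ n * (C * ∫⁻ x in {x | 2 ^ n < w x}, w x ∂μ) :=
        mul_le_mul_right (ENNReal.tsum_le_tsum hlayer) 16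
    _ = 16 * C * ∫⁻ x, (∑' n : ℤ, if (2 : ℝ≥0∞) ^ n < w x then 2 ^ n else 0) * w x ∂μ := by
        simp_rw [mul_left_comm _ C, ENNReal.tsum_mul_left, hsum, mul_assoc]
    _ ≤ 16 * C * ∫⁻ x, 2 * w x * w x ∂μ := by
        gcongr
        exact ENNReal.tsum_ite_two_zpow_lt_le _
    _ = 32 * C * ∫⁻ x, w x ^ 2 ∂μ := by
        simp_rw [mul_assoc _ (w _), ← sq]
        rw [lintegral_const_mul' 2 _ (by simp)]
        ring

lemma enorm_average_le_laverage {E : Type*} [NormedAddCommGroup E] [NormedSpace ℝ E]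
    (f : α → E) : ‖⨍ x, f x ∂μ‖ₑ ≤ ⨍⁻ x, ‖f x‖ₑ ∂μ :=
  enorm_integral_le_lintegral_enorm f

lemma half_mul_measure_le_setLIntegral_of_lt_setLAverage {s : Set α} {w : α → ℝ≥0∞}
    {l : ℝ≥0∞} (hw : Measurable w) (hl : l < ⨍⁻ x in s, w x ∂μ) :
    l / 2 * μ s ≤ ∫⁻ x in s ∩ {x | l / 2 < w x}, w x ∂μ := by
  rw [setLAverage_eq] at hl
  obtain ⟨hint, hμs⟩ : ∫⁻ x in s, w x ∂μ ≠ 0 ∧ μ s ≠ ∞ := by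
    rw [← not_or, ← ENNReal.div_eq_zero_iff]; exact (zero_le.trans_lt hl).ne'
  have hlt : l * μ s < ∫⁻ x in s, w x ∂μ :=
    (ENNReal.lt_div_iff_mul_lt (Or.inr hl.ne_top) (Or.inl hμs)).1 hl
  have hsplit : ∫⁻ x in s, w x ∂μ ≤ ∫⁻ x in s ∩ {x | l / 2 < w x}, w x ∂μ + l / 2 * μ s := by
    rw [← lintegral_inter_add_sdiff w s (measurableSet_lt measurable_const hw)]
    gcongr
    calc ∫⁻ x in s \ {x | l / 2 < w x}, w x ∂μ ≤ ∫⁻ _ in s \ {x | l / 2 < w x}, l / 2 ∂μ :=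
          setLIntegral_mono measurable_const fun x hx => not_lt.1 hx.2
      _ ≤ l / 2 * μ s := by rw [setLIntegral_const]; gcongr; exact sdiff_subset
  have hfin : l / 2 * μ s ≠ ∞ := ENNReal.mul_ne_top (ENNReal.div_ne_top hl.ne_top two_ne_zero) hμs
  refine ((ENNReal.add_lt_add_iff_right hfin).1 ?_).le
  rw [← add_mul, ENNReal.add_halves]
  exact hlt.trans_le hsplit

end

namespace TruncatedDyadicStructure

variable {X : Type*} [MetricSpace X] [MeasurableSpace X] {μ : Measure X}
  (D : TruncatedDyadicStructure X μ)

lemma bddAbove_setOf_le_pow {t : ℝ} (ht : 0 < t) : BddAbove {j : ℕ | t ≤ D.δ ^ j} := by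
  obtain ⟨j₀, hj₀⟩ := exists_pow_lt_of_lt_one ht D.δ_lt_one
  refine ⟨j₀, fun j hj => ?_⟩
  by_contra! hjj
  exact (hj₀.trans_le hj).not_ge (pow_le_pow_of_le_one D.δ_pos.le D.δ_lt_one.le hjj.le)

lemma le_gen {t : ℝ} {m : ℕ} (ht : 0 < t) (htm : t ≤ D.δ ^ m) : m ≤ D.gen t :=
  le_csSup (D.bddAbove_setOf_le_pow ht) htm

lemma le_pow_gen {t : ℝ} {m : ℕ} (ht : 0 < t) (htm : t ≤ D.δ ^ m) : t ≤ D.δ ^ D.gen t :=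
  Nat.sSup_mem ⟨m, htm⟩ (D.bddAbove_setOf_le_pow ht)

lemma pow_gen_succ_lt {t : ℝ} (ht : 0 < t) : D.δ ^ (D.gen t + 1) < t := by
  by_contra! h
  exact (D.gen t).lt_succ_self.not_ge (le_csSup (D.bddAbove_setOf_le_pow ht) h)

lemma subset_or_disjoint {k l α β : ℕ} (hkl : k ≤ l) (hα : α ∈ D.idx k) (hβ : β ∈ D.idx l) :
    D.Q l β ⊆ D.Q k α ∨ Disjoint (D.Q l β) (D.Q k α) :=
  (D.nested k l hkl α hα β hβ).imp_right disjoint_iff_inter_eq_empty.2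

def cubes (K : ℕ) : Set (ℕ × ℕ) := {p | K ≤ p.1 ∧ p.2 ∈ D.idx p.1}

def carlesonBox (p : ℕ × ℕ) : Set (X × ℝ) := closure (D.Q p.1 p.2) ×ˢ Ioc 0 (D.δ ^ p.1)

def whitneyBox (p : ℕ × ℕ) : Set (X × ℝ) := D.Q p.1 p.2 ×ˢ Ioc (D.δ ^ (p.1 + 1)) (D.δ ^ p.1)

lemma whitneyBox_subset_carlesonBox (p : ℕ × ℕ) : D.whitneyBox p ⊆ D.carlesonBox p :=
  prod_mono subset_closure (Ioc_subset_Ioc_left (pow_pos D.δ_pos _).le)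

lemma carlesonBox_mono {p q : ℕ × ℕ} (hQ : D.Q p.1 p.2 ⊆ D.Q q.1 q.2) (hpq : q.1 ≤ p.1) :
    D.carlesonBox p ⊆ D.carlesonBox q :=
  prod_mono (closure_mono hQ)
    (Ioc_subset_Ioc_right (pow_le_pow_of_le_one D.δ_pos.le D.δ_lt_one.le hpq))

noncomputable def whitneyLAverage (w : X → ℝ≥0∞) (K : ℕ) (q : X × ℝ) : ℝ≥0∞ :=
  ⨆ p ∈ D.cubes K, (D.whitneyBox p).indicator (fun _ => ⨍⁻ x in D.Q p.1 p.2, w x ∂μ) q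

lemma setOf_lt_whitneyLAverage_subset (w : X → ℝ≥0∞) (K : ℕ) (l : ℝ≥0∞) :
    {q | l < D.whitneyLAverage w K q} ⊆
      ⋃ p ∈ {p ∈ D.cubes K | l < ⨍⁻ x in D.Q p.1 p.2, w x ∂μ}, D.carlesonBox p := by
  intro q hq
  simp only [mem_ofPred_eq, whitneyLAverage, lt_iSup_iff] at hq
  obtain ⟨p, hp, hlq⟩ := hq
  by_cases hqp : q ∈ D.whitneyBox p
  · rw [indicator_of_mem hqp] at hlq
    exact mem_biUnion ⟨hp, hlq⟩ (D.whitneyBox_subset_carlesonBox p hqp)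
  · rw [indicator_of_notMem hqp] at hlq
    exact (not_lt_zero hlq).elim

lemma enorm_dyadicAvg_le_whitneyLAverage {E : Type*} [NormedAddCommGroup E] [NormedSpace ℝ E]
    {u : X → E} {w : X → ℝ≥0∞} (hw : ∀ᵐ x ∂μ, ‖u x‖ₑ = w x) {K : ℕ} {t : ℝ} (ht : 0 < t)
    (htK : t ≤ D.δ ^ K) (x : X) :
    ‖D.dyadicAvg u t x‖ₑ ≤ D.whitneyLAverage w K (x, t) := by
  unfold dyadicAvg
  split_ifs with h
  · obtain ⟨hα, hx⟩ := h.choose_spec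
    calc ‖⨍ y in D.Q (D.gen t) h.choose, u y ∂μ‖ₑ
        ≤ ⨍⁻ y in D.Q (D.gen t) h.choose, ‖u y‖ₑ ∂μ := enorm_average_le_laverage u
      _ = ⨍⁻ y in D.Q (D.gen t) h.choose, w y ∂μ := laverage_congr (ae_restrict_of_ae hw)
      _ ≤ D.whitneyLAverage w K (x, t) := by
        refine le_iSup₂_of_le (D.gen t, h.choose) ⟨D.le_gen ht htK, hα⟩ ?_
        have hxt : (x, t) ∈ D.whitneyBox (D.gen t, h.choose) :=
          ⟨hx, D.pow_gen_succ_lt ht, D.le_pow_gen ht htK⟩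
        rw [indicator_of_mem hxt]
  · simp

variable [OpensMeasurableSpace X]

lemma measurable_whitneyLAverage (w : X → ℝ≥0∞) (K : ℕ) : Measurable (D.whitneyLAverage w K) :=
  Measurable.biSup _ (to_countable _) fun _ hp => measurable_const.indicator
    ((D.isOpen _ _ hp.2).measurableSet.prod measurableSet_Ioc)

theorem half_mul_measure_lt_whitneyLAverage_le {ν : Measure (X × ℝ)} {w : X → ℝ≥0∞}
    {K : ℕ} {C : ℝ≥0∞} (hw : Measurable w)
    (hν : ∀ p ∈ D.cubes K, ν (D.carlesonBox p) ≤ C * μ (D.Q p.1 p.2)) (l : ℝ≥0∞) :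
    l / 2 * ν {q | l < D.whitneyLAverage w K q} ≤ C * ∫⁻ x in {x | l / 2 < w x}, w x ∂μ := by
  set E := {x | l / 2 < w x}
  set S := {p ∈ D.cubes K | l < ⨍⁻ x in D.Q p.1 p.2, w x ∂μ}
  have hQm (p : S) : MeasurableSet (D.Q p.1.1 p.1.2) :=
    (D.isOpen _ _ p.2.1.2).measurableSet
  have hcover := D.setOf_lt_whitneyLAverage_subset w K l
  rw [biUnion_eq_iUnion] at hcover
  calc l / 2 * ν {q | l < D.whitneyLAverage w K q}
      ≤ ((l / 2) • ν) (⋃ p : S, D.carlesonBox p) := by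
        rw [Measure.smul_apply, smul_eq_mul]; gcongr
    _ ≤ (C • (μ.restrict E).withDensity w) (⋃ p : S, D.Q p.1.1 p.1.2) := by
        refine measure_iUnion_le_of_nested (fun p : S => p.1.1) hQm
          (fun p q hpq => D.subset_or_disjoint hpq p.2.1.2 q.2.1.2)
          (fun p q hQ hpq => D.carlesonBox_mono hQ hpq) fun p => ?_
        rw [Measure.smul_apply, Measure.smul_apply, withDensity_apply _ (hQm p),
          Measure.restrict_restrict (hQm p), smul_eq_mul, smul_eq_mul]
        calc l / 2 * ν (D.carlesonBox p) ≤ l / 2 * (C * μ (D.Q p.1.1 p.1.2)) := by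
              gcongr; exact hν p p.2.1
          _ = C * (l / 2 * μ (D.Q p.1.1 p.1.2)) := mul_left_comm _ _ _
          _ ≤ C * ∫⁻ x in D.Q p.1.1 p.1.2 ∩ E, w x ∂μ := by
              gcongr; exact half_mul_measure_le_setLIntegral_of_lt_setLAverage hw p.2.2
    _ ≤ (C • (μ.restrict E).withDensity w) univ := measure_mono (subset_univ _)
    _ = C * ∫⁻ x in E, w x ∂μ := by
        rw [Measure.smul_apply, withDensity_apply _ MeasurableSet.univ, Measure.restrict_univ,
          smul_eq_mul]

end TruncatedDyadicStructure

theorem carleson_embedding_of_dyadicAvg_general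
    {X : Type*} [MetricSpace X] [MeasurableSpace X] [BorelSpace X]
    (μ : Measure X)
    (D : TruncatedDyadicStructure X μ) (J : ℕ) (t₀ : ℝ) (ht₀ : 0 < t₀)
    (ht₀J : t₀ ≤ D.δ ^ J) (N : ℕ) :
    ∃ C > 0, ∀ (ν : Measure (X × ℝ)) (Cν : ℝ), 0 ≤ Cν →
      (∀ j, J ≤ j → ∀ α ∈ D.idx j, D.δ ^ (j + 1) < t₀ →
        ν (closure (D.Q j α) ×ˢ Set.Ioc 0 (D.δ ^ j)) ≤ ENNReal.ofReal Cν * μ (D.Q j α)) →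
      ∀ u : X → EuclideanSpace ℂ (Fin N), MemLp u 2 μ →
        (∫⁻ p in Set.univ ×ˢ Set.Ioc (0 : ℝ) t₀,
            (‖D.dyadicAvg u p.2 p.1‖₊ : ℝ≥0∞) ^ 2 ∂ν)
          ≤ ENNReal.ofReal (C * Cν) * ∫⁻ x, (‖u x‖₊ : ℝ≥0∞) ^ 2 ∂μ := by
  refine ⟨32, by norm_num, fun ν Cν _ hν u hu => ?_⟩
  set K := D.gen t₀
  have hKt₀ : t₀ ≤ D.δ ^ K := D.le_pow_gen ht₀ ht₀J
  have hνK (p) (hp : p ∈ D.cubes K) :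
      ν (D.carlesonBox p) ≤ ENNReal.ofReal Cν * μ (D.Q p.1 p.2) :=
    hν p.1 ((D.le_gen ht₀ ht₀J).trans hp.1) p.2 hp.2 <|
      (pow_le_pow_of_le_one D.δ_pos.le D.δ_lt_one.le (Nat.add_le_add_right hp.1 1)).trans_lt
        (D.pow_gen_succ_lt ht₀)
  obtain ⟨w, hw, hwu⟩ : ∃ w : X → ℝ≥0∞, Measurable w ∧ ∀ᵐ x ∂μ, ‖u x‖ₑ = w x :=
    ⟨_, hu.aestronglyMeasurable.enorm.measurable_mk, hu.aestronglyMeasurable.enorm.ae_eq_mk⟩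
  have hG := D.measurable_whitneyLAverage w K
  calc ∫⁻ q in univ ×ˢ Ioc 0 t₀, (‖D.dyadicAvg u q.2 q.1‖₊ : ℝ≥0∞) ^ 2 ∂ν
      ≤ ∫⁻ q in univ ×ˢ Ioc 0 t₀, D.whitneyLAverage w K q ^ 2 ∂ν :=
        setLIntegral_mono (hG.pow_const 2) fun q hq => by
          gcongr
          exact D.enorm_dyadicAvg_le_whitneyLAverage hwu hq.2.1 (hq.2.2.trans hKt₀) q.1
    _ ≤ ∫⁻ q, D.whitneyLAverage w K q ^ 2 ∂ν := setLIntegral_le_lintegral _ _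
    _ ≤ 32 * ENNReal.ofReal Cν * ∫⁻ x, w x ^ 2 ∂μ := lintegral_sq_le_of_half_mul_measure_lt_le hG hw
        (D.half_mul_measure_lt_whitneyLAverage_le hw hνK)
    _ = ENNReal.ofReal (32 * Cν) * ∫⁻ x, (‖u x‖₊ : ℝ≥0∞) ^ 2 ∂μ := by
        rw [ENNReal.ofReal_mul (by norm_num), ENNReal.ofReal_ofNat]
        congr 1
        exact lintegral_congr_ae (hwu.mono fun x hx => by simp only [← hx, enorm_eq_nnnorm])

/-- **Local Carleson embedding theorem** (Proposition 7.1 of the paper).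
Let `(X,d)` be a complete metric space with a Borel-regular exponentially locally
doubling measure `μ`, equipped with a truncated dyadic structure with truncation
generation `J`, and fix `t₀ ≤ δ^J`.  There is a constant `C`, depending only on the
doubling and dyadic constants, such that for every positive Borel measure `ν` on
`X × (0,t₀]` whose Carleson norm is bounded by `Cν` (i.e. `ν(R_Q) ≤ Cν μ(Q)` for every
dyadic cube `Q ∈ Δ_t` with `t ≤ t₀`, where `R_Q = closure Q × (0, ℓ(Q)]`), and every
`u ∈ L²(X;ℂ^N)`,
`∬_{X×(0,t₀]} |A_t u(x)|² dν(x,t) ≤ C ‖ν‖_C ‖u‖²_{L²}`. -/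
theorem carleson_embedding_of_dyadicAvg
    {X : Type*} [MetricSpace X] [CompleteSpace X] [MeasurableSpace X] [BorelSpace X]
    (μ : Measure X) (c κ lam : ℝ) (hc : 1 ≤ c) (hκ : 0 ≤ κ) (hlam : 0 ≤ lam)
    (hdoub : ∀ (x : X) (r t : ℝ), 0 < r → 1 ≤ t →
      0 < μ (ball x r) ∧
      μ (ball x (t * r)) ≤ ENNReal.ofReal (c * t ^ κ * Real.exp (lam * t * r)) * μ (ball x r) ∧
      μ (ball x (t * r)) < ⊤)
    (D : TruncatedDyadicStructure X μ) (J : ℕ) (t₀ : ℝ) (ht₀ : 0 < t₀)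
    (ht₀J : t₀ ≤ D.δ ^ J) (N : ℕ) :
    ∃ C > 0, ∀ (ν : Measure (X × ℝ)) (Cν : ℝ), 0 ≤ Cν →
      (∀ j, J ≤ j → ∀ α ∈ D.idx j, D.δ ^ (j + 1) < t₀ →
        ν (closure (D.Q j α) ×ˢ Set.Ioc 0 (D.δ ^ j)) ≤ ENNReal.ofReal Cν * μ (D.Q j α)) →
      ∀ u : X → EuclideanSpace ℂ (Fin N), MemLp u 2 μ →
        (∫⁻ p in Set.univ ×ˢ Set.Ioc (0 : ℝ) t₀,
            (‖D.dyadicAvg u p.2 p.1‖₊ : ℝ≥0∞) ^ 2 ∂ν)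
          ≤ ENNReal.ofReal (C * Cν) * ∫⁻ x, (‖u x‖₊ : ℝ≥0∞) ^ 2 ∂μ :=
  carleson_embedding_of_dyadicAvg_general μ D J t₀ ht₀ ht₀J N
end

section
/- Let (X,d) be a metric space with a Borel measure μ satisfying the exponentially locally doubling condition with constants c ≥ 1 and κ, λ ≥ 0. Let r > 0 and let {B_j = B(x_j, r)}_j be a countable pairwise disjoint collection of open balls of radius r. Then there exists a constant C, depending only on c and κ, such that for every η ≥ 1 and every x ∈ X, Σ_j 1_{B(x_j, ηr)}(x) ≤ C η^κ e^{4λcηr}; that is, the dilated balls {B(x_j, ηr)} have overlap bounded by C η^κ e^{4λcηr}. -/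
/-!
Fix `x` and let `S` be the set of indices with `x ∈ B(x_j, ηr)`. For `j ∈ S` the small ball
`B_j` lies in `B(x, (η+1)r)`, which in turn lies in `B(x_j, (2η+1)r)`; so doubling gives
`μ(B(x, (η+1)r)) ≤ K μ(B_j)` with `K = c (2η+1)^κ e^{λ(2η+1)r}`. Summing over the disjoint
`B_j`, `j ∈ S`, gives `#S · μ(B(x, (η+1)r)) ≤ K μ(B(x, (η+1)r))`, hence `#S ≤ K`, and
`K ≤ c 3^κ η^κ e^{4λcηr}` for `η ≥ 1`.
-/

open MeasureTheory Metric Function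
open scoped ENNReal

section

variable {ι X : Type*}

theorem tsum_indicator_one_eq_encard (D : ι → Set X) (x : X) :
    ∑' i, (D i).indicator (fun _ => (1 : ℝ≥0∞)) x = ({i | x ∈ D i}.encard : ℝ≥0∞) := by
  rw [← ENNReal.tsum_set_one, tsum_subtype {i | x ∈ D i} fun _ => (1 : ℝ≥0∞)]
  congr 1 with i

theorem encard_le_of_measure_le_mul [MeasurableSpace X] {μ : Measure X} {s : Set ι}
    {A : ι → Set X} {U : Set X} {K : ℝ≥0∞} (hA : ∀ i ∈ s, MeasurableSet (A i))
    (hdisj : s.PairwiseDisjoint A) (hAU : ∀ i ∈ s, A i ⊆ U) (hU₀ : μ U ≠ 0) (hU : μ U ≠ ∞)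
    (hK : ∀ i ∈ s, μ U ≤ K * μ (A i)) : (s.encard : ℝ≥0∞) ≤ K := by
  rw [← ENNReal.mul_le_mul_iff_left hU₀ hU, ← ENNReal.tsum_set_const]
  calc ∑' _ : s, μ U
      ≤ ∑' i : s, K * μ (A i) := ENNReal.tsum_le_tsum fun i => hK i i.2
    _ = K * ∑' i : s, μ (A i) := ENNReal.tsum_mul_left
    _ ≤ K * μ (⋃ i : s, A i) := by
      gcongr
      exact tsum_meas_le_meas_iUnion_of_disjoint μ (fun i => hA i i.2) hdisj.subtype
    _ ≤ K * μ U := by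
      gcongr
      exact Set.iUnion_subset fun i => hAU i i.2

def IsExpLocallyDoubling [PseudoMetricSpace X] [MeasurableSpace X] (μ : Measure X)
    (c κ lam : ℝ) : Prop :=
  ∀ (x : X) (r t : ℝ), 0 < r → 1 ≤ t →
    0 < μ (ball x r) ∧
    μ (ball x (t * r)) ≤ ENNReal.ofReal (c * t ^ κ * Real.exp (lam * t * r)) * μ (ball x r) ∧
    μ (ball x (t * r)) < ⊤

theorem IsExpLocallyDoubling.encard_setOf_mem_ball_le [PseudoMetricSpace X] [MeasurableSpace X]
    [OpensMeasurableSpace X] {μ : Measure X} {c κ lam : ℝ} (hμ : IsExpLocallyDoubling μ c κ lam)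
    {ctr : ι → X} {r : ℝ} (hr : 0 < r) (hdisj : Pairwise (Disjoint on fun i => ball (ctr i) r))
    {η : ℝ} (hη : 0 ≤ η) (x : X) :
    ({i | x ∈ ball (ctr i) (η * r)}.encard : ℝ≥0∞) ≤
      ENNReal.ofReal (c * (2 * η + 1) ^ κ * Real.exp (lam * (2 * η + 1) * r)) := by
  refine encard_le_of_measure_le_mul (U := ball x ((η + 1) * r))
    (fun _ _ => measurableSet_ball) (hdisj.set_pairwise _) (fun i hi => ball_subset_ball' ?_)
    (hμ x _ 1 (by positivity) le_rfl).1.ne' (hμ x r (η + 1) hr (by linarith)).2.2.ne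
    fun i hi => ?_
  · rw [dist_comm]
    linarith [mem_ball.1 hi]
  · calc μ (ball x ((η + 1) * r))
        ≤ μ (ball (ctr i) ((2 * η + 1) * r)) := by
          refine measure_mono (ball_subset_ball' ?_)
          linarith [mem_ball.1 hi]
      _ ≤ _ := (hμ (ctr i) r (2 * η + 1) hr (by linarith)).2.1

end

/-- **Bounded overlap of dilated balls** (Lemma 7.2 of the paper).
Let `(X,d)` be a metric space with a Borel measure `μ` satisfying the exponentially
locally doubling condition with constants `c ≥ 1`, `κ, λ ≥ 0`.  Then there is a constant
`C`, depending only on `c` and `κ`, such that for every `r > 0`, every countable pairwise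
disjoint collection of balls `B_j = B(x_j, r)`, every `η ≥ 1` and every `x ∈ X`,
`∑_j 1_{B(x_j, ηr)}(x) ≤ C η^κ e^{4λcηr}`. -/
theorem bounded_overlap_of_dilated_balls
    {X : Type*} [MetricSpace X] [MeasurableSpace X] [BorelSpace X]
    (μ : Measure X) (c κ lam : ℝ) (hc : 1 ≤ c) (hκ : 0 ≤ κ) (hlam : 0 ≤ lam)
    (hdoub : ∀ (x : X) (r t : ℝ), 0 < r → 1 ≤ t →
      0 < μ (ball x r) ∧
      μ (ball x (t * r)) ≤ ENNReal.ofReal (c * t ^ κ * Real.exp (lam * t * r)) * μ (ball x r) ∧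
      μ (ball x (t * r)) < ⊤) :
    ∃ C > 0, ∀ (ι : Type) (_ : Countable ι) (ctr : ι → X) (r : ℝ), 0 < r →
      (Pairwise fun i j => Disjoint (ball (ctr i) r) (ball (ctr j) r)) →
      ∀ (η : ℝ), 1 ≤ η → ∀ x : X,
        (∑' i, Set.indicator (ball (ctr i) (η * r)) (fun _ => (1 : ℝ≥0∞)) x)
          ≤ ENNReal.ofReal (C * η ^ κ * Real.exp (4 * lam * c * η * r)) := by
  refine ⟨c * 3 ^ κ, by positivity, fun ι _ ctr r hr hdisj η hη x => ?_⟩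
  rw [tsum_indicator_one_eq_encard]
  refine (IsExpLocallyDoubling.encard_setOf_mem_ball_le hdoub hr hdisj (by linarith) x).trans
    (ENNReal.ofReal_le_ofReal ?_)
  have hexp : lam * (2 * η + 1) * r ≤ 4 * lam * c * η * r := by
    have : lam * (2 * η + 1) * r ≤ lam * (4 * c * η) * r := by gcongr; nlinarith
    linarith
  calc c * (2 * η + 1) ^ κ * Real.exp (lam * (2 * η + 1) * r)
      ≤ c * (3 * η) ^ κ * Real.exp (4 * lam * c * η * r) := by gcongr; linarith
    _ = c * 3 ^ κ * η ^ κ * Real.exp (4 * lam * c * η * r) := by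
      rw [Real.mul_rpow (by norm_num) (by linarith)]
      ring
end
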